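/- For the backward shift B on the space ω = 𝕂^ℕ of all sequences with the product topology, the set ℓbo(B) of vectors with locally bounded orbit is not B-invariant: there exists x ∈ ℓbo(B) with Bx ∉ ℓbo(B). -/
import Mathlib

/-- Block start positions. -/
def LL : ℕ → ℕ
  | 0 => 1
  | s + 1 => LL s + (Nat.unpair s).1 + 1

lemma LL_pos (s : ℕ) : 0 < LL s := by
  induction s with
  | zero => simp [LL]
  | succ s ih => rw [LL]; omega

lemma LL_succ (s : ℕ) : LL (s + 1) = LL s + (Nat.unpair s).1 + 1 := rfl

lemma LL_strictMono : StrictMono LL := by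
  apply strictMono_nat_of_lt_succ
  intro s
  rw [LL_succ]; omega

lemma LL_lt_self (s : ℕ) : s < LL s := by
  induction s with
  | zero => simp [LL]
  | succ s ih => rw [LL_succ]; omega

/-- The sequence with arbitrarily large spikes after copies of initial blocks. -/
def yseq : ℕ → ℝ
  | 0 => 1
  | n + 1 =>
    let s := Nat.findGreatest (fun s => LL s ≤ n + 1) (n + 1)
    if n + 1 = LL s + (Nat.unpair s).1 then ((Nat.unpair s).2 : ℝ)
    else yseq (n + 1 - LL s)
decreasing_by
  exact Nat.sub_lt (Nat.succ_pos _) (LL_pos _)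

lemma findGreatest_LL_eq {s n : ℕ} (h1 : LL s ≤ n) (h2 : n < LL (s + 1)) :
    Nat.findGreatest (fun s => LL s ≤ n) n = s := by
  rw [Nat.findGreatest_eq_iff]
  refine ⟨le_trans (LL_lt_self s).le h1, fun _ => h1, fun s' hs' _ hP => ?_⟩
  have : LL (s + 1) ≤ LL s' := LL_strictMono.monotone hs'
  omega

lemma yseq_eq {s n : ℕ} (h1 : LL s ≤ n) (h2 : n < LL (s + 1)) :
    yseq n = if n = LL s + (Nat.unpair s).1 then ((Nat.unpair s).2 : ℝ)
      else yseq (n - LL s) := by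
  obtain ⟨m, rfl⟩ : ∃ m, n = m + 1 := ⟨n - 1, by have := LL_pos s; omega⟩
  rw [yseq.eq_2]
  have hs : Nat.findGreatest (fun s => LL s ≤ m + 1) (m + 1) = s :=
    findGreatest_LL_eq h1 h2
  simp only [hs]

lemma yseq_copy {s k : ℕ} (hk : k < (Nat.unpair s).1) :
    yseq (LL s + k) = yseq k := by
  rw [yseq_eq (Nat.le_add_right _ _) (by rw [LL_succ]; omega)]
  rw [if_neg (by omega)]
  congr 1
  omega

lemma yseq_spike (s : ℕ) :
    yseq (LL s + (Nat.unpair s).1) = ((Nat.unpair s).2 : ℝ) := by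
  rw [yseq_eq (Nat.le_add_right _ _) (by rw [LL_succ]; omega)]
  rw [if_pos rfl]

lemma yseq_nonneg : ∀ n, 0 ≤ yseq n := by
  intro n
  induction n using Nat.strong_induction_on with
  | _ n ih =>
    rcases n with _ | m
    · rw [yseq.eq_1]; norm_num
    · rw [yseq.eq_2]
      split
      · exact Nat.cast_nonneg _
      · exact ih _ (Nat.sub_lt (Nat.succ_pos _) (LL_pos _))

/-- The backward shift `B((x_j)_j) = (x_{j+1})_j` as a continuous linear operator on
the Fréchet space `ω = ℝ^ℕ` of all sequences with the product topology. -/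
def backwardShift : (ℕ → ℝ) →L[ℝ] (ℕ → ℝ) where
  toFun := fun x n => x (n + 1)
  map_add' := fun _ _ => rfl
  map_smul' := fun _ _ => rfl
  cont := continuous_pi fun n => continuous_apply (n + 1)

/-- The orbit `{Bⁿ x : n ≥ 1}`. -/
def orbit (T : (ℕ → ℝ) →L[ℝ] (ℕ → ℝ)) (x : ℕ → ℝ) : Set (ℕ → ℝ) :=
  Set.range fun n : ℕ => (T ^ (n + 1)) x

/-- `x` has a locally bounded orbit for `T`. -/
def HasLocallyBoundedOrbit (T : (ℕ → ℝ) →L[ℝ] (ℕ → ℝ)) (x : ℕ → ℝ) : Prop :=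
  ∃ U ∈ nhds x, Bornology.IsVonNBounded ℝ (U ∩ orbit T x)

lemma backwardShift_apply (x : ℕ → ℝ) (n : ℕ) : backwardShift x n = x (n + 1) := rfl

lemma pow_backwardShift_apply (k : ℕ) (x : ℕ → ℝ) (n : ℕ) :
    (backwardShift ^ k) x n = x (n + k) := by
  induction k generalizing x with
  | zero => simp
  | succ k ih =>
    rw [pow_succ, ContinuousLinearMap.mul_apply, ih, backwardShift_apply,
      Nat.add_assoc]

def xseq : ℕ → ℝ := fun n => if n = 0 then (-1 : ℝ) else yseq (n - 1)

lemma bx_eq : backwardShift xseq = yseq := by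
  funext n
  rw [backwardShift_apply]
  simp [xseq]

/-- For the backward shift on `ω = ℝ^ℕ`, the set of vectors with locally bounded
orbit is not invariant: some `x ∈ ℓbo(B)` has `B x ∉ ℓbo(B)`. -/
theorem lbo_not_invariant_backwardShift :
    ∃ x : ℕ → ℝ, HasLocallyBoundedOrbit backwardShift x ∧
      ¬ HasLocallyBoundedOrbit backwardShift (backwardShift x) := by
  refine ⟨xseq, ?_, ?_⟩
  · refine ⟨{z | z 0 < 0}, ?_, ?_⟩
    · exact IsOpen.mem_nhds ((continuous_apply 0).isOpen_preimage _ isOpen_Iio)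
        (by simp [xseq])
    · have hempty : {z : ℕ → ℝ | z 0 < 0} ∩ orbit backwardShift xseq = ∅ := by
        ext z
        simp only [Set.mem_inter_iff, Set.mem_empty_iff_false, iff_false, orbit,
          Set.mem_range, not_and]
        rintro hz ⟨n, rfl⟩
        rw [Set.mem_setOf_eq, pow_backwardShift_apply] at hz
        have : xseq (0 + (n + 1)) = yseq n := by simp [xseq]
        rw [this] at hz
        exact absurd hz (not_lt.2 (yseq_nonneg n))
      rw [hempty]
      exact Bornology.isVonNBounded_empty _ _
  · rw [bx_eq]
    rintro ⟨U, hU, hbdd⟩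
    rw [nhds_pi, Filter.mem_pi] at hU
    obtain ⟨I, hIfin, t, ht, hsub⟩ := hU
    obtain ⟨b, hb⟩ := hIfin.bddAbove
    set m₀ : ℕ := b + 1 with hm₀
    have key : ∀ M : ℕ,
        (fun n => yseq (LL (Nat.pair m₀ M) + n)) ∈ U ∩ orbit backwardShift yseq := by
      intro M
      constructor
      · apply hsub
        intro i hi
        have hi' : i < m₀ := Nat.lt_succ_of_le (hb hi)
        have hcopy : yseq (LL (Nat.pair m₀ M) + i) = yseq i := by
          apply yseq_copy
          rw [Nat.unpair_pair]
          exact hi'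
        show yseq (LL (Nat.pair m₀ M) + i) ∈ t i
        rw [hcopy]
        exact mem_of_mem_nhds (ht i)
      · refine ⟨LL (Nat.pair m₀ M) - 1, funext fun n => ?_⟩
        show (backwardShift ^ (LL (Nat.pair m₀ M) - 1 + 1)) yseq n =
          yseq (LL (Nat.pair m₀ M) + n)
        rw [pow_backwardShift_apply]
        congr 1
        have := LL_pos (Nat.pair m₀ M)
        omega
    have hV : {z : ℕ → ℝ | |z m₀| < 1} ∈ nhds (0 : ℕ → ℝ) := by
      refine IsOpen.mem_nhds ?_ (by simp)
      exact (continuous_abs.comp (continuous_apply m₀)).isOpen_preimage _ isOpen_Iio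
    have habs := hbdd hV
    rw [absorbs_iff_norm] at habs
    obtain ⟨r, hr⟩ := habs
    set c : ℝ := max r 1 with hc
    have hc1 : 1 ≤ c := le_max_right _ _
    have hcn : r ≤ ‖c‖ := by
      rw [Real.norm_eq_abs, abs_of_pos (by linarith)]
      exact le_max_left _ _
    have hsubc := hr c hcn
    set M : ℕ := ⌈c⌉₊ + 1 with hM
    have hcM : c < (M : ℕ) := by
      have := Nat.le_ceil c
      push_cast [hM]
      linarith
    obtain ⟨v, hv, hveq⟩ := hsubc (key M)
    have hzm : yseq (LL (Nat.pair m₀ M) + m₀) = (M : ℝ) := by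
      have h := yseq_spike (Nat.pair m₀ M)
      rwa [Nat.unpair_pair] at h
    have hvm : |v m₀| < 1 := hv
    have heval : c * v m₀ = (M : ℝ) := by
      have := congrFun hveq m₀
      simpa [hzm] using this
    have : (M : ℝ) ≤ |c * v m₀| := by rw [heval]; simp
    rw [abs_mul, abs_of_pos (by linarith : (0:ℝ) < c)] at this
    nlinarith [abs_nonneg (v m₀)]
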